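/- Define, for r ∈ (−π/2, π/2), U(r) := 540·(r + π/2) + 80·sin(2r) + 3·sin(4r) + (686/3)·sin(2r)/(sin²r + 1/6), and f(r) := (sin²r + 1/6)·U(r). Then: (1) the function f₁(r) := sin²r + 1/6 satisfies f₁″ + 8·tan(r)·f₁′ − 12·f₁ = 0 on (−π/2, π/2); (2) U is differentiable with U′(r) = 96·cos⁸(r)/(sin²r + 1/6)² on (−π/2, π/2); and (3) f satisfies f″ + 8·tan(r)·f′ − 12·f = 0 on (−π/2, π/2). -/

import Mathlib

noncomputable section

open Real

/-- `U(r) = 540(r + π/2) + 80 sin(2r) + 3 sin(4r) + (686/3) sin(2r)/(sin²r + 1/6)`. -/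
def Ufun (r : ℝ) : ℝ :=
  540 * (r + π / 2) + 80 * Real.sin (2 * r) + 3 * Real.sin (4 * r) +
    (686 / 3) * Real.sin (2 * r) / ((Real.sin r) ^ 2 + 1 / 6)

/-- `f(r) = (sin²r + 1/6)·U(r)`. -/
def ffun (r : ℝ) : ℝ := ((Real.sin r) ^ 2 + 1 / 6) * Ufun r

/-- `f₁(r) = sin²r + 1/6`. -/
def f1fun (r : ℝ) : ℝ := (Real.sin r) ^ 2 + 1 / 6

/-!
`f₁ = sin²r + 1/6 = (4 - 3 cos 2r)/6` solves `f'' + 8 tan(r) f' - 12 f = 0` by direct computation,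
and `f = f₁ U` is the second solution given by reduction of order: for `L y = y'' + p y' + q y` and
`ν' = -p ν` one has `L (y U) = U L y + ν y⁻¹ (ν⁻¹ y² U')'`, so `y U` solves the equation along with
`y` as soon as `U' = c ν / y²`. For `p = 8 tan` take `ν = cos⁸`; the formula `U' = 96 cos⁸ / f₁²` is
then a rational identity in `cos 2r`.
-/

open Filter Topology

def secondOrderResidual (p q y : ℝ → ℝ) (r : ℝ) : ℝ :=
  deriv (deriv y) r + p r * deriv y r + q r * y r

theorem secondOrderResidual_mul_of_hasDerivAt {p q y U ν : ℝ → ℝ} {c r : ℝ}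
    (hy : ∀ᶠ x in 𝓝 r, DifferentiableAt ℝ y x) (hy' : DifferentiableAt ℝ (deriv y) r)
    (hU : ∀ᶠ x in 𝓝 r, HasDerivAt U (c * ν x / y x ^ 2) x)
    (hν : HasDerivAt ν (-(p r * ν r)) r) (hyr : y r ≠ 0) :
    secondOrderResidual p q (y * U) r = U r * secondOrderResidual p q y r := by
  have hderiv : deriv (y * U) =ᶠ[𝓝 r] fun x => deriv y x * U x + y x * (c * ν x / y x ^ 2) := by
    filter_upwards [hy, hU] with x hyx hUx using (hyx.hasDerivAt.mul hUx).deriv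
  have hderiv2 : HasDerivAt (fun x => deriv y x * U x + y x * (c * ν x / y x ^ 2)) _ r :=
    (hy'.hasDerivAt.mul hU.self_of_nhds).add (hy.self_of_nhds.hasDerivAt.mul
      ((hν.const_mul c).div (hy.self_of_nhds.hasDerivAt.pow 2) (pow_ne_zero 2 hyr)))
  rw [secondOrderResidual, secondOrderResidual, hderiv.deriv_eq, hderiv.eq_of_nhds, hderiv2.deriv]
  simp only [Pi.mul_apply]
  field_simp
  ring

theorem secondOrderResidual_eight_tan (y : ℝ → ℝ) (r : ℝ) :
    secondOrderResidual (fun x => 8 * tan x) (fun _ => -12) y r =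
      deriv (deriv y) r + 8 * tan r * deriv y r - 12 * y r := by
  rw [secondOrderResidual]
  ring

theorem hasDerivAt_sin_const_mul (a x : ℝ) :
    HasDerivAt (fun x => sin (a * x)) (a * cos (a * x)) x := by
  simpa [mul_comm] using ((hasDerivAt_id x).const_mul a).sin

theorem hasDerivAt_cos_pow_eight (r : ℝ) :
    HasDerivAt (fun x => cos x ^ 8) (-(8 * tan r * cos r ^ 8)) r := by
  refine ((hasDerivAt_cos r).pow 8).congr_deriv ?_
  rw [tan_eq_sin_div_cos]
  field_simp
  ring

theorem f1fun_ne_zero (x : ℝ) : f1fun x ≠ 0 := by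
  unfold f1fun
  positivity

theorem f1fun_eq_cos (x : ℝ) : f1fun x = (4 - 3 * cos (2 * x)) / 6 := by
  rw [f1fun, sin_sq_eq_half_sub]
  ring

theorem hasDerivAt_f1fun (x : ℝ) : HasDerivAt f1fun (sin (2 * x)) x := by
  refine (((hasDerivAt_sin x).pow 2).add_const (1 / 6 : ℝ)).congr_deriv ?_
  rw [sin_two_mul]
  ring

theorem deriv_f1fun : deriv f1fun = fun x => sin (2 * x) :=
  funext fun x => (hasDerivAt_f1fun x).deriv

theorem hasDerivAt_deriv_f1fun (x : ℝ) : HasDerivAt (deriv f1fun) (2 * cos (2 * x)) x :=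
  deriv_f1fun ▸ hasDerivAt_sin_const_mul 2 x

theorem secondOrderResidual_f1fun {r : ℝ} (hr : cos r ≠ 0) :
    secondOrderResidual (fun x => 8 * tan x) (fun _ => -12) f1fun r = 0 := by
  rw [secondOrderResidual, (hasDerivAt_deriv_f1fun r).deriv, (hasDerivAt_f1fun r).deriv, f1fun,
    tan_eq_sin_div_cos, sin_two_mul, cos_two_mul']
  field_simp
  linear_combination 12 * sin_sq_add_cos_sq r

theorem hasDerivAt_Ufun (r : ℝ) :
    HasDerivAt Ufun (96 * cos r ^ 8 / f1fun r ^ 2) r := by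
  have hU : HasDerivAt (fun x => 540 * (x + π / 2) + 80 * sin (2 * x) + 3 * sin (4 * x) +
      686 / 3 * sin (2 * x) / f1fun x) _ r :=
    (((((hasDerivAt_id r).add_const (π / 2)).const_mul 540).add
      ((hasDerivAt_sin_const_mul 2 r).const_mul 80)).add
      ((hasDerivAt_sin_const_mul 4 r).const_mul 3)).add
      (((hasDerivAt_sin_const_mul 2 r).const_mul (686 / 3)).div (hasDerivAt_f1fun r)
        (f1fun_ne_zero r))
  refine hU.congr_deriv ?_
  rw [f1fun_eq_cos, show cos r ^ 8 = (cos r ^ 2) ^ 4 by ring, cos_sq,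
    show 4 * r = 2 * (2 * r) by ring, cos_two_mul (2 * r), mul_assoc _ (sin (2 * r)), ← sq,
    sin_sq (2 * r)]
  have hden : 4 - cos (2 * r) * 3 ≠ 0 := by linarith [cos_le_one (2 * r)]
  field_simp
  ring

/-- On `(-π/2, π/2)`: `f₁` solves `f″ + 8 tan(r) f′ - 12 f = 0`, `U` has derivative
`96 cos⁸r/(sin²r + 1/6)²`, and `f` solves `f″ + 8 tan(r) f′ - 12 f = 0`. -/
theorem ode_solutions :
    (∀ r ∈ Set.Ioo (-(π / 2)) (π / 2),
      deriv (deriv f1fun) r + 8 * Real.tan r * deriv f1fun r - 12 * f1fun r = 0) ∧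
    (∀ r ∈ Set.Ioo (-(π / 2)) (π / 2),
      HasDerivAt Ufun (96 * (Real.cos r) ^ 8 / ((Real.sin r) ^ 2 + 1 / 6) ^ 2) r) ∧
    (∀ r ∈ Set.Ioo (-(π / 2)) (π / 2),
      deriv (deriv ffun) r + 8 * Real.tan r * deriv ffun r - 12 * ffun r = 0) := by
  have hf1 (r : ℝ) (hr : r ∈ Set.Ioo (-(π / 2)) (π / 2)) :
      secondOrderResidual (fun x => 8 * tan x) (fun _ => -12) f1fun r = 0 :=
    secondOrderResidual_f1fun (cos_pos_of_mem_Ioo hr).ne'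
  refine ⟨fun r hr => ?_, fun r _ => hasDerivAt_Ufun r, fun r hr => ?_⟩
  · rw [← secondOrderResidual_eight_tan]
    exact hf1 r hr
  · rw [show ffun = f1fun * Ufun from rfl, ← secondOrderResidual_eight_tan,
      secondOrderResidual_mul_of_hasDerivAt (c := 96) (ν := fun x => cos x ^ 8)
        (.of_forall fun x => (hasDerivAt_f1fun x).differentiableAt)
        (hasDerivAt_deriv_f1fun r).differentiableAt (.of_forall hasDerivAt_Ufun)
        (hasDerivAt_cos_pow_eight r) (f1fun_ne_zero r),
      hf1 r hr, mul_zero]
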